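/- Let P be a finite poset and Q a finite poset of height one. Let f : E(P) → Q be a strict surjective order-preserving map (strict: f[L(P)] = L(Q) and f[U(P)] = U(Q)). Then f extends to an order-preserving map g : P → Q if and only if the following holds: no 4-element subset F ⊆ E(P) that is an improper 4-crown of P contains points from two different fibers f⁻¹(a), f⁻¹(b) with a ≠ b in L(Q) and also points from two different fibers f⁻¹(v), f⁻¹(w) with v ≠ w in U(Q). -/

import Mathlib

open Set

/-- Minimal points of a poset. -/
def LSet (α : Type*) [PartialOrder α] : Set α := {x | ∀ y, y ≤ x → y = x}

/-- Maximal points of a poset. -/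
def USet (α : Type*) [PartialOrder α] : Set α := {x | ∀ y, x ≤ y → y = x}

/-- Extremal points. -/
def ESet (α : Type*) [PartialOrder α] : Set α := LSet α ∪ USet α

/-- Non-extremal (interior) points. -/
def MSet (α : Type*) [PartialOrder α] : Set α := (ESet α)ᶜ

/-- No isolated points: every point is comparable to some other point. -/
def NoIsolated (α : Type*) [PartialOrder α] : Prop := ∀ x : α, ∃ y : α, x < y ∨ y < x

/-- Height one: every point is extremal and some strict comparability exists. -/
def HeightOne (α : Type*) [PartialOrder α] : Prop :=
  (∀ x : α, x ∈ ESet α) ∧ ∃ x y : α, x < y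

/-- A 4-crown with minimal points a, b and maximal points v, w:
the comparabilities are exactly a<v, a<w, b<v, b<w. -/
def IsCrown {α : Type*} [PartialOrder α] (a b v w : α) : Prop :=
  a < v ∧ a < w ∧ b < v ∧ b < w ∧ ¬ a ≤ b ∧ ¬ b ≤ a ∧ ¬ v ≤ w ∧ ¬ w ≤ v

/-- The inner of a 4-crown: [a,v] ∩ [b,w]. -/
def crownInner {α : Type*} [PartialOrder α] (a b v w : α) : Set α :=
  {m | a ≤ m ∧ m ≤ v} ∩ {m | b ≤ m ∧ m ≤ w}

/-- An improper 4-crown contained in the extremal points E(P). -/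
def IsImproperCrownE {α : Type*} [PartialOrder α] (a b v w : α) : Prop :=
  IsCrown a b v w ∧ a ∈ ESet α ∧ b ∈ ESet α ∧ v ∈ ESet α ∧ w ∈ ESet α ∧
    (crownInner a b v w).Nonempty

/-- Inner points of improper 4-crowns contained in E(P). -/
def innerPts (α : Type*) [PartialOrder α] : Set α :=
  {m | ∃ a b v w : α, IsImproperCrownE a b v w ∧ m ∈ crownInner a b v w}

/-- Ξ(m): union of all improper 4-crowns with inner point m. -/
def Xi {α : Type*} [PartialOrder α] (m : α) : Set α :=
  (LSet α ∩ {x | x ≤ m}) ∪ (USet α ∩ {x | m ≤ x})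

/-- 4-crown bundles: maximal sets Ξ(m) with respect to inclusion. -/
def bundles (α : Type*) [PartialOrder α] : Set (Set α) :=
  {F | ∃ m ∈ innerPts α, F = Xi m ∧
    ∀ m' ∈ innerPts α, Xi m ⊆ Xi m' → Xi m' = Xi m}

/-- R is a retract of the poset on α. -/
def IsRetract (α : Type*) [PartialOrder α] (R : Set α) : Prop :=
  ∃ r : α → α, Monotone r ∧ (∀ x, r (r x) = r x) ∧ Set.range r = R

/-- C is a retract of the induced subposet on Y. -/
def IsRetractIn {α : Type*} [PartialOrder α] (Y C : Set α) : Prop :=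
  ∃ r : Y → Y, Monotone r ∧ (∀ x, r (r x) = r x) ∧
    Set.range r = {y : Y | (y : α) ∈ C}

/-- The comparability graph of the poset is connected. -/
def PosetConnected (α : Type*) [PartialOrder α] : Prop :=
  ∀ x y : α, Relation.ReflTransGen (fun u v => u ≤ v ∨ v ≤ u) x y

/-- Minimal points of an induced subposet. -/
def minIn {α : Type*} [PartialOrder α] (S : Set α) : Set α :=
  {x ∈ S | ∀ y ∈ S, y ≤ x → y = x}

/-- Maximal points of an induced subposet. -/
def maxIn {α : Type*} [PartialOrder α] (S : Set α) : Set α :=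
  {x ∈ S | ∀ y ∈ S, x ≤ y → y = x}

/-!
If `g` extends `f`, then for an inner point `m` of an improper crown `{a, b, v, w}` the value
`g m` lies above `f a, f b` and below `f v, f w`; in a poset of height one `g m` is minimal or
maximal, which forces `f a = f b` or `f v = f w`.

Conversely, let `A x` be the `f`-image of the minimal points below `x` and `B x` the `f`-image of
the maximal points above `x`. Every value in `A x` lies below every value in `B x`, and if both
contained two values, two minimal points below `x` and two maximal points above `x` would form an
improper crown with inner point `x` meeting two fibers on each side. So `A x` or `B x` is a
singleton, and taking the value of `A` on the down-set where it is single-valued (and `x` is not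
maximal), and the value of `B` elsewhere, gives a monotone extension.
-/

theorem monotone_piecewise_of_subsingleton {α β : Type*} [Preorder α] [Preorder β]
    {A B : α → Set β} {S : Set α} {a b : α → β} [DecidablePred (· ∈ S)]
    (hA : Monotone A) (hB : Antitone B)
    (hAB : ∀ x, ∀ p ∈ A x, ∀ q ∈ B x, p ≤ q) (hS : IsLowerSet S)
    (hAS : ∀ x ∈ S, (A x).Subsingleton) (hBS : ∀ x ∉ S, (B x).Subsingleton)
    (ha : ∀ x, a x ∈ A x) (hb : ∀ x, b x ∈ B x) :
    Monotone (S.piecewise a b) := by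
  intro x y hxy
  by_cases hy : y ∈ S
  · have hx : x ∈ S := hS hxy hy
    rw [piecewise_eq_of_mem _ _ _ hx, piecewise_eq_of_mem _ _ _ hy]
    exact (hAS y hy (hA hxy (ha x)) (ha y)).le
  · rw [piecewise_eq_of_notMem _ _ _ hy]
    by_cases hx : x ∈ S
    · rw [piecewise_eq_of_mem _ _ _ hx]
      exact hAB y _ (hA hxy (ha x)) _ (hb y)
    · rw [piecewise_eq_of_notMem _ _ _ hx]
      exact (hBS x hx (hb x) (hB hxy (hb y))).le

section Extremal

variable {α β : Type*} [PartialOrder α]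

theorem disjoint_LSet_USet (h : NoIsolated α) : Disjoint (LSet α) (USet α) := by
  refine Set.disjoint_left.mpr fun x hxL hxU => ?_
  obtain ⟨y, hy | hy⟩ := h x
  · exact hy.ne' (hxU y hy.le)
  · exact hy.ne (hxL y hy.le)

theorem lt_of_le_of_mem_LSet_of_mem_USet (h : NoIsolated α) {l u : α} (hl : l ∈ LSet α)
    (hu : u ∈ USet α) (hlu : l ≤ u) : l < u :=
  hlu.lt_of_ne fun e => Set.disjoint_left.mp (disjoint_LSet_USet h) hl (e ▸ hu)

theorem exists_mem_LSet_le [WellFoundedLT α] (x : α) : ∃ l ∈ LSet α, l ≤ x := by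
  obtain ⟨l, hlx, hl⟩ := exists_minimal_le_of_wellFoundedLT (fun _ => True) x trivial
  exact ⟨l, fun y hy => hy.antisymm (minimal_true.mp hl hy), hlx⟩

theorem exists_mem_USet_ge [WellFoundedGT α] (x : α) : ∃ u ∈ USet α, x ≤ u := by
  obtain ⟨u, hxu, hu⟩ := exists_maximal_ge_of_wellFoundedGT (fun _ => True) x trivial
  exact ⟨u, fun y hy => (maximal_true.mp hu hy).antisymm hy, hxu⟩

theorem isImproperCrownE_of_le_of_le (h : NoIsolated α) {a b v w x : α}
    (ha : a ∈ LSet α) (hb : b ∈ LSet α) (hv : v ∈ USet α) (hw : w ∈ USet α)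
    (hab : a ≠ b) (hvw : v ≠ w) (hax : a ≤ x) (hbx : b ≤ x) (hxv : x ≤ v)
    (hxw : x ≤ w) :
    IsImproperCrownE a b v w :=
  have hlt {l u : α} : l ∈ LSet α → u ∈ USet α → l ≤ u → l < u :=
    lt_of_le_of_mem_LSet_of_mem_USet h
  ⟨⟨hlt ha hv (hax.trans hxv), hlt ha hw (hax.trans hxw), hlt hb hv (hbx.trans hxv),
      hlt hb hw (hbx.trans hxw), fun e => hab (hb a e), fun e => hab (ha b e).symm,
      fun e => hvw (hv w e).symm, fun e => hvw (hw v e)⟩,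
    Or.inl ha, Or.inl hb, Or.inr hv, Or.inr hw, x, ⟨hax, hxv⟩, hbx, hxw⟩

def imageMinBelow (f : α → β) (x : α) : Set β := f '' (LSet α ∩ Iic x)

def imageMaxAbove (f : α → β) (x : α) : Set β := f '' (USet α ∩ Ici x)

theorem monotone_imageMinBelow (f : α → β) : Monotone (imageMinBelow f) :=
  fun _ _ hxy => image_mono (inter_subset_inter_right _ (Iic_subset_Iic.mpr hxy))

theorem antitone_imageMaxAbove (f : α → β) : Antitone (imageMaxAbove f) :=
  fun _ _ hxy => image_mono (inter_subset_inter_right _ (Ici_subset_Ici.mpr hxy))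

theorem imageMinBelow_le_imageMaxAbove [LE β] {f : α → β}
    (hf : ∀ x ∈ ESet α, ∀ y ∈ ESet α, x ≤ y → f x ≤ f y) (x : α) :
    ∀ p ∈ imageMinBelow f x, ∀ q ∈ imageMaxAbove f x, p ≤ q := by
  rintro _ ⟨l, ⟨hl, hlx⟩, rfl⟩ _ ⟨u, ⟨hu, hxu⟩, rfl⟩
  exact hf l (Or.inl hl) u (Or.inr hu) (hlx.trans hxu)

theorem imageMinBelow_of_mem_LSet (f : α → β) {x : α} (hx : x ∈ LSet α) :
    imageMinBelow f x = {f x} := by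
  refine (Set.subset_singleton_iff.mpr ?_).antisymm
    (singleton_subset_iff.mpr ⟨x, ⟨hx, le_rfl⟩, rfl⟩)
  rintro _ ⟨l, ⟨-, hlx⟩, rfl⟩
  rw [hx l hlx]

theorem imageMaxAbove_of_mem_USet (f : α → β) {x : α} (hx : x ∈ USet α) :
    imageMaxAbove f x = {f x} := by
  refine (Set.subset_singleton_iff.mpr ?_).antisymm
    (singleton_subset_iff.mpr ⟨x, ⟨hx, le_rfl⟩, rfl⟩)
  rintro _ ⟨u, ⟨-, hxu⟩, rfl⟩
  rw [hx u hxu]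

theorem subsingleton_imageMinBelow_or_imageMaxAbove (h : NoIsolated α) {f : α → β}
    (hcrown : ∀ a b v w : α, IsImproperCrownE a b v w → ¬ (f a ≠ f b ∧ f v ≠ f w))
    (x : α) :
    (imageMinBelow f x).Subsingleton ∨ (imageMaxAbove f x).Subsingleton := by
  by_contra! hx
  obtain ⟨_, ⟨a, ⟨ha, hax⟩, rfl⟩, _, ⟨b, ⟨hb, hbx⟩, rfl⟩, hfab⟩ := hx.1
  obtain ⟨_, ⟨v, ⟨hv, hxv⟩, rfl⟩, _, ⟨w, ⟨hw, hxw⟩, rfl⟩, hfvw⟩ := hx.2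
  exact hcrown a b v w (isImproperCrownE_of_le_of_le h ha hb hv hw (ne_of_apply_ne f hfab)
    (ne_of_apply_ne f hfvw) hax hbx hxv hxw) ⟨hfab, hfvw⟩

theorem IsImproperCrownE.eq_or_eq_of_monotone_extension [PartialOrder β]
    (hβ : ∀ y : β, y ∈ ESet β) {f g : α → β} (hg : Monotone g)
    (hgf : ∀ x ∈ ESet α, g x = f x) {a b v w : α} (hC : IsImproperCrownE a b v w) :
    f a = f b ∨ f v = f w := by
  obtain ⟨⟨-, -, -, -, -, -, -, -⟩, haE, hbE, hvE, hwE, m, ⟨ham, hmv⟩, hbm, hmw⟩ := hC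
  have hga : f a ≤ g m := hgf a haE ▸ hg ham
  have hgb : f b ≤ g m := hgf b hbE ▸ hg hbm
  have hgv : g m ≤ f v := hgf v hvE ▸ hg hmv
  have hgw : g m ≤ f w := hgf w hwE ▸ hg hmw
  rcases hβ (g m) with hm | hm
  · exact Or.inl ((hm _ hga).trans (hm _ hgb).symm)
  · exact Or.inr ((hm _ hgv).trans (hm _ hgw).symm)

theorem exists_monotone_extension_of_forall_improperCrown [WellFoundedLT α] [WellFoundedGT α]
    [Preorder β] (h : NoIsolated α) {f : α → β}
    (hf : ∀ x ∈ ESet α, ∀ y ∈ ESet α, x ≤ y → f x ≤ f y)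
    (hcrown : ∀ a b v w : α, IsImproperCrownE a b v w → ¬ (f a ≠ f b ∧ f v ≠ f w)) :
    ∃ g : α → β, Monotone g ∧ ∀ x ∈ ESet α, g x = f x := by
  classical
  have hA (x : α) : (imageMinBelow f x).Nonempty :=
    let ⟨l, hl, hlx⟩ := exists_mem_LSet_le x
    ⟨f l, l, ⟨hl, hlx⟩, rfl⟩
  have hB (x : α) : (imageMaxAbove f x).Nonempty :=
    let ⟨u, hu, hxu⟩ := exists_mem_USet_ge x
    ⟨f u, u, ⟨hu, hxu⟩, rfl⟩
  set S := {x | (imageMinBelow f x).Subsingleton ∧ x ∉ USet α}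
  have hS : IsLowerSet S := fun x y hyx hx =>
    ⟨hx.1.anti (monotone_imageMinBelow f hyx), fun hy => hx.2 (hy x hyx ▸ hy)⟩
  have hBS (x : α) (hx : x ∉ S) : (imageMaxAbove f x).Subsingleton := by
    rcases not_and_or.mp hx with hAx | hxU
    · exact (subsingleton_imageMinBelow_or_imageMaxAbove h hcrown x).resolve_left hAx
    · rw [imageMaxAbove_of_mem_USet f (not_not.mp hxU)]
      exact subsingleton_singleton
  refine ⟨S.piecewise (fun x => (hA x).some) (fun x => (hB x).some),
    monotone_piecewise_of_subsingleton (monotone_imageMinBelow f) (antitone_imageMaxAbove f)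
      (imageMinBelow_le_imageMaxAbove hf) hS (fun x hx => hx.1) hBS
      (fun x => (hA x).some_mem) (fun x => (hB x).some_mem), ?_⟩
  rintro x (hxL | hxU)
  · have hAx := imageMinBelow_of_mem_LSet f hxL
    have hxS : x ∈ S :=
      ⟨hAx ▸ subsingleton_singleton, Set.disjoint_left.mp (disjoint_LSet_USet h) hxL⟩
    rw [piecewise_eq_of_mem _ _ _ hxS, ← mem_singleton_iff, ← hAx]
    exact (hA x).some_mem
  · rw [piecewise_eq_of_notMem _ _ _ fun hxS => hxS.2 hxU]
    rw [← mem_singleton_iff, ← imageMaxAbove_of_mem_USet f hxU]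
    exact (hB x).some_mem

end Extremal

theorem stmt3_general {α β : Type*} [Fintype α] [PartialOrder α] [PartialOrder β]
    (hPiso : NoIsolated α) (hQ : HeightOne β)
    (f : α → β) (hf : ∀ x ∈ ESet α, ∀ y ∈ ESet α, x ≤ y → f x ≤ f y) :
    (∃ g : α → β, Monotone g ∧ ∀ x ∈ ESet α, g x = f x) ↔
    (∀ a b v w : α, IsImproperCrownE a b v w → ¬ (f a ≠ f b ∧ f v ≠ f w)) :=
  ⟨fun ⟨_, hg, hgf⟩ _ _ _ _ hC ⟨hab, hvw⟩ =>
    (hC.eq_or_eq_of_monotone_extension hQ.1 hg hgf).elim hab hvw,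
    exists_monotone_extension_of_forall_improperCrown hPiso hf⟩

theorem stmt3 {α β : Type*} [Fintype α] [PartialOrder α] [Fintype β] [PartialOrder β]
    (hPiso : NoIsolated α) (hQ : HeightOne β)
    (f : α → β) (hf : ∀ x ∈ ESet α, ∀ y ∈ ESet α, x ≤ y → f x ≤ f y)
    (hL : f '' LSet α = LSet β) (hU : f '' USet α = USet β) :
    (∃ g : α → β, Monotone g ∧ ∀ x ∈ ESet α, g x = f x) ↔
    (∀ a b v w : α, IsImproperCrownE a b v w → ¬ (f a ≠ f b ∧ f v ≠ f w)) :=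
  stmt3_general hPiso hQ f hf
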